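/- Let τ_k ∈ [0,1] with τ_k → τ̂, and for each k let w^k be a pulse for F^{τ_k}. Suppose that w^k, (w^k)′ and (w^k)″ converge uniformly on [0,∞) to ŵ, ŵ′ and ŵ″ respectively, and that ŵ(x) → 0 as x → +∞. Then ŵᵢ(x) > 0 for every i ∈ {1,…,8} and every x ≥ 0. -/

import Mathlib

open Filter Topology Matrix
open scoped ENNReal

noncomputable section

/-- The positive parameters of the blood coagulation system.
Indices `0..7` of `k`, `h`, `D` correspond to `k₁..k₈`, `h₁..h₈`, `D₁..D₈`;
indices `2..7` of `ρ` correspond to `ρ₃..ρ₈` (so `T⁰ = ρ₈ = ρ 7`). -/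
structure Params where
  k : Fin 8 → ℝ
  kb6 : ℝ
  kb8 : ℝ
  h : Fin 8 → ℝ
  ρ : Fin 8 → ℝ
  D : Fin 8 → ℝ

/-- All parameters are positive (`ρ i` only for the meaningful indices `i ≥ 2`). -/
def Params.Pos (p : Params) : Prop :=
  (∀ i, 0 < p.k i) ∧ 0 < p.kb6 ∧ 0 < p.kb8 ∧ (∀ i, 0 < p.h i) ∧
    (∀ i : Fin 8, 2 ≤ (i : ℕ) → 0 < p.ρ i) ∧ (∀ i, 0 < p.D i)

/-- The reaction terms `F = (F₁,…,F₈)` (component `i-1` is `Fᵢ`, `v (i-1)` is `vᵢ`). -/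
def Fvec (p : Params) (v : Fin 8 → ℝ) : Fin 8 → ℝ :=
  ![p.k 0 * v 2 * v 5 - p.h 0 * v 0,
    p.k 1 * v 3 * v 4 - p.h 1 * v 1,
    p.k 2 * v 7 * (p.ρ 2 - v 2) - p.h 2 * v 2,
    p.k 3 * v 7 * (p.ρ 3 - v 3) - p.h 3 * v 3,
    p.k 4 * v 6 * (p.ρ 4 - v 4) - p.h 4 * v 4,
    (p.k 5 * v 4 + p.kb6 * v 1) * (p.ρ 5 - v 5) - p.h 5 * v 5,
    p.k 6 * v 7 * (p.ρ 6 - v 6) - p.h 6 * v 6,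
    (p.k 7 * v 5 + p.kb8 * v 0) * (p.ρ 7 - v 7) - p.h 7 * v 7]

def phi3 (p : Params) (T : ℝ) : ℝ := p.k 2 * p.ρ 2 * T / (p.k 2 * T + p.h 2)

def phi4 (p : Params) (T : ℝ) : ℝ := p.k 3 * p.ρ 3 * T / (p.k 3 * T + p.h 3)

def phi7 (p : Params) (T : ℝ) : ℝ := p.k 6 * p.ρ 6 * T / (p.k 6 * T + p.h 6)

def phi5 (p : Params) (T : ℝ) : ℝ :=
  p.k 4 * p.ρ 4 * phi7 p T / (p.k 4 * phi7 p T + p.h 4)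

def phi2 (p : Params) (T : ℝ) : ℝ := p.k 1 / p.h 1 * (phi4 p T * phi5 p T)

def phi6 (p : Params) (T : ℝ) : ℝ :=
  p.ρ 5 * (p.k 5 * phi5 p T + p.kb6 * phi2 p T) /
    (p.k 5 * phi5 p T + p.kb6 * phi2 p T + p.h 5)

def phi1 (p : Params) (T : ℝ) : ℝ := p.k 0 / p.h 0 * (phi3 p T * phi6 p T)

/-- `P(T) = (k₈φ₆(T) + k̄₈φ₁(T))(T⁰ − T) − h₈T`. -/
def Ppoly (p : Params) (T : ℝ) : ℝ :=
  (p.k 7 * phi6 p T + p.kb8 * phi1 p T) * (p.ρ 7 - T) - p.h 7 * T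

/-- The vector `(φ₁(T),…,φ₇(T),T)`; `phivec p T̄ = w̄`, `phivec p T⁻ = w⁻`. -/
def phivec (p : Params) (T : ℝ) : Fin 8 → ℝ :=
  ![phi1 p T, phi2 p T, phi3 p T, phi4 p T, phi5 p T, phi6 p T, phi7 p T, T]

/-- Condition (P): `P` has exactly the three nonnegative zeros `0 < T̄ < T⁻`, with
`P′(0) < 0`, `P′(T̄) > 0`, `P′(T⁻) < 0`. -/
def CondP (p : Params) (Tb Tm : ℝ) : Prop :=
  0 < Tb ∧ Tb < Tm ∧
    (∀ T : ℝ, 0 ≤ T → (Ppoly p T = 0 ↔ T = 0 ∨ T = Tb ∨ T = Tm)) ∧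
    deriv (Ppoly p) 0 < 0 ∧ 0 < deriv (Ppoly p) Tb ∧ deriv (Ppoly p) Tm < 0

/-- `g` is smooth, nonnegative on `[0,∞)`, with support inside `(T̄, T⁻)`. -/
def GoodG (Tb Tm : ℝ) (g : ℝ → ℝ) : Prop :=
  ContDiff ℝ (⊤ : ℕ∞) g ∧ (∀ s : ℝ, 0 ≤ s → 0 ≤ g s) ∧ tsupport g ⊆ Set.Ioo Tb Tm

/-- The homotopy `F^τ`: components `1..7` are those of `F` and
`F^τ₈(v) = α^τ F₈(v) + β^τ P(v₈) + γ^τ g(v₈)`. -/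
def Ftau (p : Params) (τ₁ : ℝ) (g : ℝ → ℝ) (τ : ℝ) (v : Fin 8 → ℝ) : Fin 8 → ℝ :=
  fun i =>
    if i = 7 then
      (if τ < τ₁ then 1 else (1 - τ) / (1 - τ₁)) * Fvec p v 7 +
        (if τ < τ₁ then 0 else (τ - τ₁) / (1 - τ₁)) * Ppoly p (v 7) +
        (if τ < τ₁ then τ else τ₁) * g (v 7)
    else Fvec p v i

/-- The set `𝒞 = {v ∈ ℝ⁸ : vᵢ ≥ 0 for all i, vᵢ ≤ ρᵢ for i = 3,…,8}`. -/
def CSet (p : Params) : Set (Fin 8 → ℝ) :=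
  {v | (∀ i, 0 ≤ v i) ∧ ∀ i : Fin 8, 2 ≤ (i : ℕ) → v i ≤ p.ρ i}

/-- The partial derivative `∂FFᵢ/∂vⱼ` at `v`. -/
def pd (FF : (Fin 8 → ℝ) → Fin 8 → ℝ) (i j : Fin 8) (v : Fin 8 → ℝ) : ℝ :=
  deriv (fun t => FF (Function.update v j t) i) (v j)

/-- The Jacobian matrix of `FF` at `v`. -/
def Jac (FF : (Fin 8 → ℝ) → Fin 8 → ℝ) (v : Fin 8 → ℝ) : Matrix (Fin 8) (Fin 8) ℝ :=
  fun i j => pd FF i j v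

/-- `lam ∈ ℂ` is an eigenvalue of the real matrix `J`. -/
def IsEig (J : Matrix (Fin 8) (Fin 8) ℝ) (lam : ℂ) : Prop :=
  ∃ x : Fin 8 → ℂ, x ≠ 0 ∧ (J.map Complex.ofReal) *ᵥ x = lam • x

/-- A pulse for the reaction term `FF`: a `C²` decreasing positive solution of
`D w″ + FF(w) = 0` on `[0,∞)` with `w′(0) = 0` and `w(+∞) = 0`. -/
def IsPulse (p : Params) (FF : (Fin 8 → ℝ) → Fin 8 → ℝ) (w : ℝ → Fin 8 → ℝ) : Prop :=
  (∀ i, ContDiff ℝ 2 fun x => w x i) ∧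
    (∀ i : Fin 8, ∀ x : ℝ, 0 ≤ x →
      p.D i * deriv (deriv (fun y => w y i)) x + FF (w x) i = 0) ∧
    (∀ i, deriv (fun y => w y i) 0 = 0) ∧
    (∀ i, Tendsto (fun x => w x i) atTop (𝓝 0)) ∧
    (∀ i : Fin 8, ∀ x : ℝ, 0 < x → deriv (fun y => w y i) x < 0)

/-- A travelling wave for `FF` with speed `c`, connecting `wm` (at `−∞`) to `0` (at `+∞`). -/
def IsWave (p : Params) (FF : (Fin 8 → ℝ) → Fin 8 → ℝ) (wm : Fin 8 → ℝ) (c : ℝ)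
    (u : ℝ → Fin 8 → ℝ) : Prop :=
  (∀ i, ContDiff ℝ 2 fun x => u x i) ∧
    (∀ i : Fin 8, ∀ x : ℝ,
      p.D i * deriv (deriv (fun y => u y i)) x + c * deriv (fun y => u y i) x +
        FF (u x) i = 0) ∧
    (∀ i, Tendsto (fun x => u x i) atBot (𝓝 (wm i))) ∧
    (∀ i, Tendsto (fun x => u x i) atTop (𝓝 0))

/-- The weighted function `x ↦ μ(x)·z(x)` with `μ(x) = √(1+x²)`. -/
def wtd (z : ℝ → Fin 8 → ℝ) : ℝ → Fin 8 → ℝ := fun x => Real.sqrt (1 + x ^ 2) • z x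

/-- The weighted Hölder norm `‖z‖_{E¹_μ}`, valued in `ℝ≥0∞`
(the norm on `ℝ⁸ = Fin 8 → ℝ` is the maximum norm). -/
def E1norm (α : ℝ) (z : ℝ → Fin 8 → ℝ) : ℝ≥0∞ :=
  (⨆ x ∈ Set.Ici (0 : ℝ), ENNReal.ofReal
      (‖wtd z x‖ + ‖deriv (wtd z) x‖ + ‖deriv (deriv (wtd z)) x‖)) +
    ⨆ x ∈ Set.Ici (0 : ℝ), ⨆ y ∈ Set.Ici (0 : ℝ), ⨆ _ : x ≠ y,
      ENNReal.ofReal (‖deriv (deriv (wtd z)) x - deriv (deriv (wtd z)) y‖ / |x - y| ^ α)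

/-- A solution of the scalar pulse problem `D₈T″ + P(T) + τ₁g(T) = 0` on `[0,∞)`,
`T′(0) = 0`, `T(+∞) = 0`, `T′ < 0` on `(0,∞)`. -/
def ScalarPulse (p : Params) (τ₁ : ℝ) (g : ℝ → ℝ) (T : ℝ → ℝ) : Prop :=
  ContDiff ℝ 2 T ∧
    (∀ x : ℝ, 0 ≤ x → p.D 7 * deriv (deriv T) x + Ppoly p (T x) + τ₁ * g (T x) = 0) ∧
    deriv T 0 = 0 ∧ Tendsto T atTop (𝓝 0) ∧ ∀ x : ℝ, 0 < x → deriv T x < 0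


/-! ### Auxiliary lemmas -/

private lemma contDiff2_facts {f : ℝ → ℝ} (h : ContDiff ℝ 2 f) :
    Differentiable ℝ f ∧ Differentiable ℝ (deriv f) ∧ Continuous (deriv (deriv f)) := by
  have h2 : ContDiff ℝ ((1:ℕ)+1) f := by exact_mod_cast h
  rw [contDiff_succ_iff_deriv] at h2
  obtain ⟨hd, -, h1⟩ := h2
  have h1' : ContDiff ℝ 1 (deriv f) := by exact_mod_cast h1
  rw [contDiff_one_iff_deriv] at h1'
  exact ⟨hd, h1'.1, h1'.2⟩

private lemma mob_nonneg {k ρ h s : ℝ} (hk : 0 < k) (hρ : 0 < ρ) (hh : 0 < h) (hs : 0 ≤ s) :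
    0 ≤ k * ρ * s / (k * s + h) := div_nonneg (by positivity) (by positivity)

private lemma mob_pos {k ρ h s : ℝ} (hk : 0 < k) (hρ : 0 < ρ) (hh : 0 < h) (hs : 0 < s) :
    0 < k * ρ * s / (k * s + h) := div_pos (by positivity) (by positivity)

private lemma mob_lt {k ρ h s : ℝ} (hk : 0 < k) (hρ : 0 < ρ) (hh : 0 < h) (hs : 0 ≤ s) :
    k * ρ * s / (k * s + h) < ρ := by
  rw [div_lt_iff₀ (by positivity)]; nlinarith

private lemma mob_row {k ρ h s : ℝ} (hden : k * s + h ≠ 0) :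
    k * s * (ρ - k * ρ * s / (k * s + h)) - h * (k * ρ * s / (k * s + h)) = 0 := by
  field_simp; ring

private lemma mob2_nonneg {ρ h s : ℝ} (hρ : 0 < ρ) (hh : 0 < h) (hs : 0 ≤ s) :
    0 ≤ ρ * s / (s + h) := div_nonneg (by positivity) (by positivity)

private lemma mob2_pos {ρ h s : ℝ} (hρ : 0 < ρ) (hh : 0 < h) (hs : 0 < s) :
    0 < ρ * s / (s + h) := div_pos (by positivity) (by positivity)

private lemma mob2_lt {ρ h s : ℝ} (hρ : 0 < ρ) (hh : 0 < h) (hs : 0 ≤ s) :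
    ρ * s / (s + h) < ρ := by
  rw [div_lt_iff₀ (by positivity)]; nlinarith

private lemma mob2_row {ρ h s : ℝ} (hden : s + h ≠ 0) :
    s * (ρ - ρ * s / (s + h)) - h * (ρ * s / (s + h)) = 0 := by
  field_simp; ring

section PhiFacts

variable {p : Params} (hp : p.Pos) {T : ℝ}
include hp

private lemma phi3_nonneg (hT : 0 ≤ T) : 0 ≤ phi3 p T :=
  mob_nonneg (hp.1 2) (hp.2.2.2.2.1 2 (by decide)) (hp.2.2.2.1 2) hT

private lemma phi3_pos (hT : 0 < T) : 0 < phi3 p T :=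
  mob_pos (hp.1 2) (hp.2.2.2.2.1 2 (by decide)) (hp.2.2.2.1 2) hT

private lemma phi3_lt (hT : 0 ≤ T) : phi3 p T < p.ρ 2 :=
  mob_lt (hp.1 2) (hp.2.2.2.2.1 2 (by decide)) (hp.2.2.2.1 2) hT

private lemma phi4_nonneg (hT : 0 ≤ T) : 0 ≤ phi4 p T :=
  mob_nonneg (hp.1 3) (hp.2.2.2.2.1 3 (by decide)) (hp.2.2.2.1 3) hT

private lemma phi4_pos (hT : 0 < T) : 0 < phi4 p T :=
  mob_pos (hp.1 3) (hp.2.2.2.2.1 3 (by decide)) (hp.2.2.2.1 3) hT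

private lemma phi4_lt (hT : 0 ≤ T) : phi4 p T < p.ρ 3 :=
  mob_lt (hp.1 3) (hp.2.2.2.2.1 3 (by decide)) (hp.2.2.2.1 3) hT

private lemma phi7_nonneg (hT : 0 ≤ T) : 0 ≤ phi7 p T :=
  mob_nonneg (hp.1 6) (hp.2.2.2.2.1 6 (by decide)) (hp.2.2.2.1 6) hT

private lemma phi7_pos (hT : 0 < T) : 0 < phi7 p T :=
  mob_pos (hp.1 6) (hp.2.2.2.2.1 6 (by decide)) (hp.2.2.2.1 6) hT

private lemma phi7_lt (hT : 0 ≤ T) : phi7 p T < p.ρ 6 :=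
  mob_lt (hp.1 6) (hp.2.2.2.2.1 6 (by decide)) (hp.2.2.2.1 6) hT

private lemma phi5_nonneg (hT : 0 ≤ T) : 0 ≤ phi5 p T :=
  mob_nonneg (hp.1 4) (hp.2.2.2.2.1 4 (by decide)) (hp.2.2.2.1 4) (phi7_nonneg hp hT)

private lemma phi5_pos (hT : 0 < T) : 0 < phi5 p T :=
  mob_pos (hp.1 4) (hp.2.2.2.2.1 4 (by decide)) (hp.2.2.2.1 4) (phi7_pos hp hT)

private lemma phi5_lt (hT : 0 ≤ T) : phi5 p T < p.ρ 4 :=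
  mob_lt (hp.1 4) (hp.2.2.2.2.1 4 (by decide)) (hp.2.2.2.1 4) (phi7_nonneg hp hT)

private lemma phi2_nonneg (hT : 0 ≤ T) : 0 ≤ phi2 p T := by
  have h1 := hp.1 1; have h2 := hp.2.2.2.1 1
  have := phi4_nonneg hp hT; have := phi5_nonneg hp hT
  unfold phi2; positivity

private lemma phi2_pos (hT : 0 < T) : 0 < phi2 p T := by
  have h1 := hp.1 1; have h2 := hp.2.2.2.1 1
  have := phi4_pos hp hT; have := phi5_pos hp hT
  unfold phi2; positivity

private lemma phi6_nonneg (hT : 0 ≤ T) : 0 ≤ phi6 p T :=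
  mob2_nonneg (hp.2.2.2.2.1 5 (by decide)) (hp.2.2.2.1 5)
    (by have := hp.1 5; have := hp.2.1; have := phi5_nonneg hp hT;
        have := phi2_nonneg hp hT; positivity)

private lemma phi6_pos (hT : 0 < T) : 0 < phi6 p T :=
  mob2_pos (hp.2.2.2.2.1 5 (by decide)) (hp.2.2.2.1 5)
    (by have := hp.1 5; have := hp.2.1; have := phi5_pos hp hT;
        have := phi2_pos hp hT; positivity)

private lemma phi6_lt (hT : 0 ≤ T) : phi6 p T < p.ρ 5 :=
  mob2_lt (hp.2.2.2.2.1 5 (by decide)) (hp.2.2.2.1 5)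
    (by have := hp.1 5; have := hp.2.1; have := phi5_nonneg hp hT;
        have := phi2_nonneg hp hT; positivity)

private lemma phi1_nonneg (hT : 0 ≤ T) : 0 ≤ phi1 p T := by
  have h1 := hp.1 0; have h2 := hp.2.2.2.1 0
  have := phi3_nonneg hp hT; have := phi6_nonneg hp hT
  unfold phi1; positivity

private lemma phi1_pos (hT : 0 < T) : 0 < phi1 p T := by
  have h1 := hp.1 0; have h2 := hp.2.2.2.1 0
  have := phi3_pos hp hT; have := phi6_pos hp hT
  unfold phi1; positivity

private lemma id_row2 (hT : 0 ≤ T) :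
    p.k 2 * T * (p.ρ 2 - phi3 p T) - p.h 2 * phi3 p T = 0 :=
  mob_row (by have := hp.1 2; have := hp.2.2.2.1 2; positivity)

private lemma id_row3 (hT : 0 ≤ T) :
    p.k 3 * T * (p.ρ 3 - phi4 p T) - p.h 3 * phi4 p T = 0 :=
  mob_row (by have := hp.1 3; have := hp.2.2.2.1 3; positivity)

private lemma id_row6 (hT : 0 ≤ T) :
    p.k 6 * T * (p.ρ 6 - phi7 p T) - p.h 6 * phi7 p T = 0 :=
  mob_row (by have := hp.1 6; have := hp.2.2.2.1 6; positivity)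

private lemma id_row4 (hT : 0 ≤ T) :
    p.k 4 * phi7 p T * (p.ρ 4 - phi5 p T) - p.h 4 * phi5 p T = 0 :=
  mob_row (by have := hp.1 4; have := hp.2.2.2.1 4; have := phi7_nonneg hp hT; positivity)

private lemma id_row5 (hT : 0 ≤ T) :
    (p.k 5 * phi5 p T + p.kb6 * phi2 p T) * (p.ρ 5 - phi6 p T) - p.h 5 * phi6 p T = 0 :=
  mob2_row (by have := hp.1 5; have := hp.2.1; have := hp.2.2.2.1 5;
               have := phi5_nonneg hp hT; have := phi2_nonneg hp hT; positivity)

private lemma id_row1 :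
    p.k 1 * phi4 p T * phi5 p T - p.h 1 * phi2 p T = 0 := by
  have h1 : p.h 1 ≠ 0 := ne_of_gt (hp.2.2.2.1 1)
  unfold phi2; field_simp; ring

private lemma id_row0 :
    p.k 0 * phi3 p T * phi6 p T - p.h 0 * phi1 p T = 0 := by
  have h0 : p.h 0 ≠ 0 := ne_of_gt (hp.2.2.2.1 0)
  unfold phi1; field_simp; ring

private lemma contAt_phi3 (hT : 0 ≤ T) : ContinuousAt (phi3 p) T := by
  have : (0:ℝ) < p.k 2 * T + p.h 2 := by
    have := hp.1 2; have := hp.2.2.2.1 2; positivity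
  exact ContinuousAt.div (by fun_prop) (by fun_prop) (ne_of_gt this)

private lemma contAt_phi4 (hT : 0 ≤ T) : ContinuousAt (phi4 p) T := by
  have : (0:ℝ) < p.k 3 * T + p.h 3 := by
    have := hp.1 3; have := hp.2.2.2.1 3; positivity
  exact ContinuousAt.div (by fun_prop) (by fun_prop) (ne_of_gt this)

private lemma contAt_phi7 (hT : 0 ≤ T) : ContinuousAt (phi7 p) T := by
  have : (0:ℝ) < p.k 6 * T + p.h 6 := by
    have := hp.1 6; have := hp.2.2.2.1 6; positivity
  exact ContinuousAt.div (by fun_prop) (by fun_prop) (ne_of_gt this)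

private lemma contAt_phi5 (hT : 0 ≤ T) : ContinuousAt (phi5 p) T := by
  have c7 := contAt_phi7 hp hT
  have : (0:ℝ) < p.k 4 * phi7 p T + p.h 4 := by
    have := hp.1 4; have := hp.2.2.2.1 4; have := phi7_nonneg hp hT; positivity
  exact ContinuousAt.div (continuousAt_const.mul c7)
    ((continuousAt_const.mul c7).add continuousAt_const) (ne_of_gt this)

private lemma contAt_phi2 (hT : 0 ≤ T) : ContinuousAt (phi2 p) T :=
  continuousAt_const.mul ((contAt_phi4 hp hT).mul (contAt_phi5 hp hT))

private lemma contAt_phi6 (hT : 0 ≤ T) : ContinuousAt (phi6 p) T := by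
  have c5 := contAt_phi5 hp hT
  have c2 := contAt_phi2 hp hT
  have : (0:ℝ) < p.k 5 * phi5 p T + p.kb6 * phi2 p T + p.h 5 := by
    have := hp.1 5; have := hp.2.1; have := hp.2.2.2.1 5
    have := phi5_nonneg hp hT; have := phi2_nonneg hp hT; positivity
  exact ContinuousAt.div
    (continuousAt_const.mul ((continuousAt_const.mul c5).add (continuousAt_const.mul c2)))
    (((continuousAt_const.mul c5).add (continuousAt_const.mul c2)).add continuousAt_const)
    (ne_of_gt this)

private lemma contAt_phi1 (hT : 0 ≤ T) : ContinuousAt (phi1 p) T :=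
  continuousAt_const.mul ((contAt_phi3 hp hT).mul (contAt_phi6 hp hT))

private lemma contAt_Ppoly (hT : 0 ≤ T) : ContinuousAt (Ppoly p) T := by
  exact ((((contAt_phi6 hp hT).const_mul _).add ((contAt_phi1 hp hT).const_mul _)).mul
    (continuousAt_const.sub continuousAt_id)).sub (continuousAt_const.mul continuousAt_id)

omit hp in
private lemma Ppoly_zero : Ppoly p 0 = 0 := by
  simp [Ppoly, phi1, phi2, phi3, phi4, phi5, phi6, phi7]

private lemma Ppoly_neg {Tb Tm : ℝ} (hP : CondP p Tb Tm) {S : ℝ} (hT : 0 < S)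
    (hTb : S < Tb) : Ppoly p S < 0 := by
  obtain ⟨hTb0, hTbm, hzero, hd0, -, -⟩ := hP
  have hdiff : DifferentiableAt ℝ (Ppoly p) 0 := by
    by_contra h
    rw [deriv_zero_of_not_differentiableAt h] at hd0
    exact lt_irrefl 0 hd0
  have hslope : Tendsto (slope (Ppoly p) 0) (𝓝[>] 0) (𝓝 (deriv (Ppoly p) 0)) :=
    (hasDerivAt_iff_tendsto_slope.mp hdiff.hasDerivAt).mono_left
      (nhdsWithin_mono _ fun x (hx : x ∈ Set.Ioi 0) => ne_of_gt hx)
  have hev : ∀ᶠ x in 𝓝[>] (0:ℝ), slope (Ppoly p) 0 x < 0 := hslope.eventually_lt_const hd0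
  have hev2 : ∀ᶠ x in 𝓝[>] (0:ℝ), x ∈ Set.Ioo (0:ℝ) Tb :=
    Ioo_mem_nhdsGT_of_mem ⟨le_refl 0, hTb0⟩
  obtain ⟨T₀, hs, hT₀⟩ := (hev.and hev2).exists
  have hPT0 : Ppoly p T₀ < 0 := by
    rw [slope_def_field, Ppoly_zero, sub_zero, sub_zero, div_lt_iff₀ hT₀.1] at hs
    linarith
  by_contra hge
  push_neg at hge
  have hne : Ppoly p S ≠ 0 := by
    intro h
    rcases (hzero S hT.le).mp h with rfl | rfl | rfl
    · exact lt_irrefl _ hT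
    · exact lt_irrefl _ hTb
    · linarith
  have hgt : 0 < Ppoly p S := lt_of_le_of_ne hge (Ne.symm hne)
  have hsub : Set.uIcc T₀ S ⊆ Set.Ioo (0:ℝ) Tb := by
    intro c hc
    rw [Set.mem_uIcc] at hc
    rcases hc with ⟨h1, h2⟩ | ⟨h1, h2⟩
    · exact ⟨lt_of_lt_of_le hT₀.1 h1, lt_of_le_of_lt h2 hTb⟩
    · exact ⟨lt_of_lt_of_le hT h1, lt_of_le_of_lt h2 hT₀.2⟩
  have hcont : ContinuousOn (Ppoly p) (Set.uIcc T₀ S) := fun y hy =>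
    (contAt_Ppoly hp (le_of_lt (hsub hy).1)).continuousWithinAt
  have h0mem : (0:ℝ) ∈ Set.uIcc (Ppoly p T₀) (Ppoly p S) :=
    Set.mem_uIcc.mpr (Or.inl ⟨hPT0.le, hgt.le⟩)
  obtain ⟨c, hc, hc0⟩ := intermediate_value_uIcc hcont h0mem
  rcases (hzero c (hsub hc).1.le).mp hc0 with rfl | rfl | rfl
  · exact lt_irrefl _ (hsub hc).1
  · exact lt_irrefl _ (hsub hc).2
  · have := (hsub hc).2; linarith

private lemma Tm_lt_rho7 {Tb Tm : ℝ} (hP : CondP p Tb Tm) : Tm < p.ρ 7 := by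
  obtain ⟨hTb0, hTbm, hzero, -, -, -⟩ := hP
  have hTm0 : 0 < Tm := hTb0.trans hTbm
  have hz : Ppoly p Tm = 0 := (hzero Tm hTm0.le).mpr (Or.inr (Or.inr rfl))
  have h6 := phi6_pos hp hTm0
  have h1 := phi1_nonneg hp hTm0.le
  have hk7 := hp.1 7
  have hkb8 := hp.2.2.1
  have hh7 := hp.2.2.2.1 7
  unfold Ppoly at hz
  by_contra hge
  push_neg at hge
  have hA : 0 ≤ p.k 7 * phi6 p Tm + p.kb8 * phi1 p Tm := by positivity
  nlinarith [mul_nonpos_of_nonneg_of_nonpos hA (by linarith : p.ρ 7 - Tm ≤ 0)]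

private lemma Ppoly_lower (hT : 0 ≤ T) (hT7 : T ≤ p.ρ 7) :
    -(p.h 7 * T) ≤ Ppoly p T := by
  have h1 := phi6_nonneg hp hT
  have h2 := phi1_nonneg hp hT
  have h3 := hp.1 7
  have h4 := hp.2.2.1
  unfold Ppoly
  nlinarith [mul_nonneg (add_nonneg (mul_nonneg h3.le h1) (mul_nonneg h4.le h2))
    (sub_nonneg.2 hT7)]

end PhiFacts

private lemma Fvec_app0 (p : Params) (v : Fin 8 → ℝ) :
    Fvec p v 0 = p.k 0 * v 2 * v 5 - p.h 0 * v 0 := rfl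
private lemma Fvec_app1 (p : Params) (v : Fin 8 → ℝ) :
    Fvec p v 1 = p.k 1 * v 3 * v 4 - p.h 1 * v 1 := rfl
private lemma Fvec_app2 (p : Params) (v : Fin 8 → ℝ) :
    Fvec p v 2 = p.k 2 * v 7 * (p.ρ 2 - v 2) - p.h 2 * v 2 := rfl
private lemma Fvec_app3 (p : Params) (v : Fin 8 → ℝ) :
    Fvec p v 3 = p.k 3 * v 7 * (p.ρ 3 - v 3) - p.h 3 * v 3 := rfl
private lemma Fvec_app4 (p : Params) (v : Fin 8 → ℝ) :
    Fvec p v 4 = p.k 4 * v 6 * (p.ρ 4 - v 4) - p.h 4 * v 4 := rfl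
private lemma Fvec_app5 (p : Params) (v : Fin 8 → ℝ) :
    Fvec p v 5 = (p.k 5 * v 4 + p.kb6 * v 1) * (p.ρ 5 - v 5) - p.h 5 * v 5 := rfl
private lemma Fvec_app6 (p : Params) (v : Fin 8 → ℝ) :
    Fvec p v 6 = p.k 6 * v 7 * (p.ρ 6 - v 6) - p.h 6 * v 6 := rfl
private lemma Fvec_app7 (p : Params) (v : Fin 8 → ℝ) :
    Fvec p v 7 = (p.k 7 * v 5 + p.kb8 * v 0) * (p.ρ 7 - v 7) - p.h 7 * v 7 := rfl

private lemma Ftau_ne7 (p : Params) (τ₁ : ℝ) (g : ℝ → ℝ) (τ : ℝ) (v : Fin 8 → ℝ)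
    {i : Fin 8} (hi : i ≠ 7) : Ftau p τ₁ g τ v i = Fvec p v i := by
  simp [Ftau, hi]

private lemma Ftau_7 (p : Params) (τ₁ : ℝ) (g : ℝ → ℝ) (τ : ℝ) (v : Fin 8 → ℝ) :
    Ftau p τ₁ g τ v 7 =
      (if τ < τ₁ then 1 else (1 - τ) / (1 - τ₁)) * Fvec p v 7 +
        (if τ < τ₁ then 0 else (τ - τ₁) / (1 - τ₁)) * Ppoly p (v 7) +
        (if τ < τ₁ then τ else τ₁) * g (v 7) := by
  simp [Ftau]

private lemma coeffs_facts {τ₁ τ : ℝ} (hτ₁ : τ₁ ∈ Set.Ioo (0:ℝ) 1) (hτ : τ ∈ Set.Icc (0:ℝ) 1) :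
    0 ≤ (if τ < τ₁ then (1:ℝ) else (1 - τ) / (1 - τ₁)) ∧
    0 ≤ (if τ < τ₁ then (0:ℝ) else (τ - τ₁) / (1 - τ₁)) ∧
    (if τ < τ₁ then (1:ℝ) else (1 - τ) / (1 - τ₁)) +
      (if τ < τ₁ then (0:ℝ) else (τ - τ₁) / (1 - τ₁)) = 1 ∧
    0 ≤ (if τ < τ₁ then τ else τ₁) := by
  obtain ⟨h0, h1⟩ := hτ₁
  obtain ⟨ht0, ht1⟩ := hτ
  have hd : (0:ℝ) < 1 - τ₁ := by linarith
  split_ifs with h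
  · norm_num; exact ht0
  · push_neg at h
    refine ⟨div_nonneg (by linarith) hd.le, div_nonneg (by linarith) hd.le, ?_, by linarith⟩
    field_simp
    ring

/-- A continuous function vanishing at infinity whose derivative is negative on `(0,∞)`
is positive on `[0,∞)`. -/
private lemma pulse_comp_pos {f : ℝ → ℝ} (hc : Continuous f)
    (hd : ∀ x : ℝ, 0 < x → deriv f x < 0) (hl : Tendsto f atTop (𝓝 0)) :
    (∀ x : ℝ, 0 ≤ x → 0 < f x) ∧ (∀ x y : ℝ, 0 ≤ x → x ≤ y → f y ≤ f x) := by
  have hs : StrictAntiOn f (Set.Ici (0:ℝ)) := by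
    apply strictAntiOn_of_deriv_neg (convex_Ici 0) hc.continuousOn
    intro z hz; rw [interior_Ici] at hz; exact hd z hz
  have hanti : ∀ x y : ℝ, 0 ≤ x → x ≤ y → f y ≤ f x := by
    intro x y hx hxy
    rcases eq_or_lt_of_le hxy with rfl | h
    · exact le_refl _
    · exact (hs hx (hx.trans hxy) h).le
  refine ⟨fun x hx => ?_, hanti⟩
  have h1 : 0 ≤ f (x+1) :=
    le_of_tendsto hl (eventually_atTop.2 ⟨x+1, fun y hy => hanti (x+1) y (by linarith) hy⟩)
  have h2 : f (x+1) < f x := hs hx (by linarith : (0:ℝ) ≤ x+1) (by linarith)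
  linarith

/-- Second derivative at a left-endpoint maximum. -/
private lemma second_deriv_nonpos {f : ℝ → ℝ} (hf : ContDiff ℝ 2 f)
    (h0 : deriv f 0 = 0) (hneg : ∀ x : ℝ, 0 < x → deriv f x < 0) :
    deriv (deriv f) 0 ≤ 0 := by
  obtain ⟨h1, h2, h3⟩ := contDiff2_facts hf
  have hdd : HasDerivAt (deriv f) (deriv (deriv f) 0) 0 := (h2 0).hasDerivAt
  have hslope := (hasDerivAt_iff_tendsto_slope.mp hdd).mono_left
      (nhdsWithin_mono _ fun x (hx : x ∈ Set.Ioi 0) => ne_of_gt hx)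
  refine le_of_tendsto hslope ?_
  filter_upwards [self_mem_nhdsWithin] with x hx
  rw [slope_def_field, h0, sub_zero, sub_zero]
  exact div_nonpos_iff.mpr (Or.inr ⟨(hneg x hx).le, le_of_lt hx⟩)

/-- A nonneg decreasing "convex on the right" function vanishing at `+∞`, with zero
derivative at `0`, is identically zero. -/
private lemma vanish_of_convex {f : ℝ → ℝ}
    (hf0 : ContinuousWithinAt f (Set.Ici 0) 0)
    (hfd : ∀ x : ℝ, 0 < x → HasDerivAt f (deriv f x) x)
    (hf'c : ContinuousWithinAt (deriv f) (Set.Ici 0) 0) (hf'0 : deriv f 0 = 0)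
    (hf'' : ∀ x : ℝ, 0 < x → HasDerivAt (deriv f) (deriv (deriv f) x) x)
    (hf''cont : ContinuousOn (deriv (deriv f)) (Set.Ici 0))
    (hconv : ∀ x : ℝ, 0 < x → 0 ≤ deriv (deriv f) x)
    (hneg : ∀ x : ℝ, 0 < x → deriv f x ≤ 0)
    (hlim : Tendsto f atTop (𝓝 0)) : ∀ x : ℝ, 0 ≤ x → f x = 0 := by
  have hkey : ∀ x : ℝ, 0 < x → deriv f x = 0 := by
    intro x hx
    have hmono : ∀ ε, ε ∈ Set.Ioo (0:ℝ) x → deriv f ε ≤ deriv f x := by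
      intro ε hε
      have hsub : Set.uIcc ε x ⊆ Set.Ici 0 := by
        rw [Set.uIcc_of_le hε.2.le]
        exact fun t ht => le_trans hε.1.le ht.1
      have hFTC : ∫ s in ε..x, deriv (deriv f) s = deriv f x - deriv f ε :=
        intervalIntegral.integral_eq_sub_of_hasDerivAt
          (fun t ht => hf'' t (lt_of_lt_of_le hε.1 (by
            rw [Set.uIcc_of_le hε.2.le] at ht; exact ht.1)))
          ((hf''cont.mono hsub).intervalIntegrable)
      have hnn : 0 ≤ ∫ s in ε..x, deriv (deriv f) s :=
        intervalIntegral.integral_nonneg hε.2.le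
          (fun s hs => hconv s (lt_of_lt_of_le hε.1 hs.1))
      rw [hFTC] at hnn
      linarith
    have htend : Tendsto (deriv f) (𝓝[>] (0:ℝ)) (𝓝 0) := by
      have h := hf'c.mono_left (nhdsWithin_mono (0:ℝ) Set.Ioi_subset_Ici_self)
      rwa [hf'0] at h
    have hge : 0 ≤ deriv f x :=
      le_of_tendsto htend (by
        filter_upwards [Ioo_mem_nhdsGT_of_mem ⟨le_refl (0:ℝ), hx⟩] with ε hε
        exact hmono ε hε)
    exact le_antisymm (hneg x hx) hge
  have hconst : ∀ x : ℝ, 0 < x → f x = 0 := by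
    intro x hx
    have hweq : ∀ y, x ≤ y → f y = f x := by
      intro y hy
      have hFTC : ∫ s in x..y, deriv f s = f y - f x :=
        intervalIntegral.integral_eq_sub_of_hasDerivAt
          (fun t ht => hfd t (lt_of_lt_of_le hx (by
            rw [Set.uIcc_of_le hy] at ht; exact ht.1)))
          (ContinuousOn.intervalIntegrable (fun t ht =>
            (hf'' t (lt_of_lt_of_le hx (by
              rw [Set.uIcc_of_le hy] at ht; exact ht.1))).continuousAt.continuousWithinAt))
      have hzero : ∫ s in x..y, deriv f s = 0 := by
        rw [intervalIntegral.integral_congr (g := fun _ => (0:ℝ))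
          (fun t ht => hkey t (lt_of_lt_of_le hx (by
            rw [Set.uIcc_of_le hy] at ht; exact ht.1)))]
        simp
      rw [hzero] at hFTC
      linarith
    have h1 : Tendsto f atTop (𝓝 (f x)) := by
      refine Tendsto.congr' ?_ (tendsto_const_nhds (α := ℝ) (f := atTop))
      filter_upwards [eventually_ge_atTop x] with y hy
      exact (hweq y hy).symm
    exact tendsto_nhds_unique h1 hlim
  intro x hx
  rcases eq_or_lt_of_le hx with rfl | h
  · have h1 : Tendsto f (𝓝[>] (0:ℝ)) (𝓝 (f 0)) :=
      hf0.mono_left (nhdsWithin_mono _ Set.Ioi_subset_Ici_self)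
    have h2 : Tendsto f (𝓝[>] (0:ℝ)) (𝓝 0) := by
      refine Tendsto.congr' ?_ (tendsto_const_nhds (α := ℝ) (f := 𝓝[>] (0:ℝ)))
      filter_upwards [self_mem_nhdsWithin] with t ht
      exact (hconst t ht).symm
    exact tendsto_nhds_unique h1 h2
  · exact hconst x h


/-- Backward propagation of zeroes for `f'' ≤ K f` type inequalities. -/
private lemma backward_zero {f : ℝ → ℝ} {K δ : ℝ} (hK : 0 < K) (hδ : 0 < δ)
    (hcont : ContinuousOn f (Set.Ici 0))
    (hfd : ∀ x : ℝ, 0 < x → HasDerivAt f (deriv f x) x)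
    (hf'' : ∀ x : ℝ, 0 < x → HasDerivAt (deriv f) (deriv (deriv f) x) x)
    (hf''c : ContinuousOn (deriv (deriv f)) (Set.Ici 0))
    (hpos : ∀ x : ℝ, 0 ≤ x → 0 ≤ f x)
    (hanti : ∀ x y : ℝ, 0 ≤ x → x ≤ y → f y ≤ f x)
    (hineq : ∀ x : ℝ, 0 < x → f x ≤ δ → deriv (deriv f) x ≤ K * f x)
    (hex : ∃ a : ℝ, 0 ≤ a ∧ f a = 0) : ∀ x : ℝ, 0 ≤ x → f x = 0 := by
  obtain ⟨a0, ha00, hfa0⟩ := hex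
  set S : Set ℝ := {x | 0 ≤ x ∧ f x = 0} with hSdef
  have hSne : S.Nonempty := ⟨a0, ha00, hfa0⟩
  have hSbdd : BddBelow S := ⟨0, fun x hx => hx.1⟩
  have hSclosed : IsClosed S := by
    have hEq : S = Set.Ici 0 ∩ f ⁻¹' {0} := by
      ext x; simp [hSdef, Set.mem_Ici]
    rw [hEq]
    exact hcont.preimage_isClosed_of_isClosed isClosed_Ici isClosed_singleton
  set a := sInf S with ha
  have haS : a ∈ S := hSclosed.csInf_mem hSne hSbdd
  have ha0 : 0 ≤ a := haS.1
  have hfa : f a = 0 := haS.2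
  have hafter : ∀ x, a ≤ x → f x = 0 := fun x hx =>
    le_antisymm (hfa ▸ hanti a x ha0 hx) (hpos x (ha0.trans hx))
  have hA : a = 0 := by
    by_contra hne
    have hapos : 0 < a := lt_of_le_of_ne ha0 (Ne.symm hne)
    have hca : ContinuousAt f a := hcont.continuousAt (Ici_mem_nhds hapos)
    have hev : ∀ᶠ y in 𝓝 a, f y < δ := by
      have h := hca
      unfold ContinuousAt at h
      rw [hfa] at h
      exact h.eventually_lt_const hδ
    obtain ⟨ε, hε, hball⟩ := Metric.eventually_nhds_iff.mp hev
    set r := min (ε/2) (min (a/2) (Real.sqrt (1/K))) with hr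
    have hr0 : 0 < r :=
      lt_min (by linarith) (lt_min (by linarith) (Real.sqrt_pos.2 (by positivity)))
    have hrK : K * r^2 ≤ 1 := by
      have h1 : r ≤ Real.sqrt (1/K) := le_trans (min_le_right _ _) (min_le_right _ _)
      have h2 : r^2 ≤ 1/K := by
        rw [← Real.sq_sqrt (le_of_lt (by positivity : (0:ℝ) < 1/K))]
        exact pow_le_pow_left₀ hr0.le h1 2
      calc K * r^2 ≤ K * (1/K) := by nlinarith [hK]
        _ = 1 := by field_simp
    set x := a - r with hxdef
    have hra : r ≤ a/2 := le_trans (min_le_right _ _) (min_le_left _ _)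
    have hx0 : 0 < x := by rw [hxdef]; linarith
    have hxa : x < a := by rw [hxdef]; linarith
    have hsmall : ∀ t, t ∈ Set.Icc x a → f t < δ := by
      intro t ht
      apply hball
      rw [Real.dist_eq, abs_lt]
      have hre : r ≤ ε/2 := min_le_left _ _
      constructor
      · have := ht.1; rw [hxdef] at this; linarith
      · linarith [ht.2]
    have hda : deriv f a = 0 := by
      apply IsLocalMin.deriv_eq_zero
      filter_upwards [isOpen_Ioi.mem_nhds hapos] with y (hy : (0:ℝ) < y)
      rw [hfa]; exact hpos y hy.le
    have hstepA : ∀ t, t ∈ Set.Icc x a → -deriv f t ≤ K * (a - t) * f t := by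
      intro t ht
      have htpos : 0 < t := lt_of_lt_of_le hx0 ht.1
      have hsub : Set.uIcc t a ⊆ Set.Ici 0 := by
        rw [Set.uIcc_of_le ht.2]
        exact fun s hs => le_trans htpos.le hs.1
      have hFTC : ∫ s in t..a, deriv (deriv f) s = deriv f a - deriv f t :=
        intervalIntegral.integral_eq_sub_of_hasDerivAt
          (fun s hs => hf'' s (lt_of_lt_of_le htpos (by
            rw [Set.uIcc_of_le ht.2] at hs; exact hs.1)))
          ((hf''c.mono hsub).intervalIntegrable)
      have hbound : ∫ s in t..a, deriv (deriv f) s ≤ ∫ s in t..a, K * f t :=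
        intervalIntegral.integral_mono_on ht.2
          ((hf''c.mono hsub).intervalIntegrable) intervalIntegrable_const
          (by
            intro s hs
            have hs0 : 0 < s := lt_of_lt_of_le htpos hs.1
            have h1 : f s ≤ f t := hanti t s htpos.le hs.1
            have h2 : f s < δ :=
              lt_of_le_of_lt h1 (hsmall t ht)
            calc deriv (deriv f) s ≤ K * f s := hineq s hs0 h2.le
              _ ≤ K * f t := by nlinarith [hK])
      rw [hFTC, hda, intervalIntegral.integral_const, smul_eq_mul] at hbound
      nlinarith [hbound]
    have hsub2 : Set.uIcc x a ⊆ Set.Ici 0 := by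
      rw [Set.uIcc_of_le hxa.le]
      exact fun s hs => le_trans hx0.le hs.1
    have hderivcont : ContinuousOn (deriv f) (Set.uIcc x a) := by
      intro s hs
      rw [Set.uIcc_of_le hxa.le] at hs
      exact (hf'' s (lt_of_lt_of_le hx0 hs.1)).continuousAt.continuousWithinAt
    have hFTC2 : ∫ s in x..a, deriv f s = f a - f x :=
      intervalIntegral.integral_eq_sub_of_hasDerivAt
        (fun s hs => hfd s (lt_of_lt_of_le hx0 (by
          rw [Set.uIcc_of_le hxa.le] at hs; exact hs.1)))
        (hderivcont.intervalIntegrable)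
    have hmono2 : ∫ s in x..a, (-deriv f s) ≤ ∫ s in x..a, K * (a - s) * f x := by
      apply intervalIntegral.integral_mono_on hxa.le
        (hderivcont.neg.intervalIntegrable)
        ((Continuous.intervalIntegrable (by fun_prop) x a))
      intro s hs
      calc -deriv f s ≤ K * (a - s) * f s := hstepA s hs
        _ ≤ K * (a - s) * f x := by
            have h1 : f s ≤ f x := hanti x s hx0.le hs.1
            nlinarith [mul_le_mul_of_nonneg_left h1 (mul_nonneg hK.le (sub_nonneg.2 hs.2))]
    have hI1 : ∫ s in x..a, (-deriv f s) = f x := by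
      rw [intervalIntegral.integral_neg, hFTC2, hfa]
      ring
    have hI2 : ∫ s in x..a, K * (a - s) * f x = K * f x * (a - x)^2/2 := by
      have hder : ∀ s ∈ Set.uIcc x a,
          HasDerivAt (fun s => -(K * f x * (a - s)^2/2)) (K * (a - s) * f x) s := by
        intro s _
        have h1 : HasDerivAt (fun s : ℝ => a - s) (-1) s := by
          simpa using (hasDerivAt_id s).const_sub a
        have h2 := (((h1.pow 2).const_mul (K * f x)).div_const 2).neg
        have h3 : HasDerivAt (fun s => -(K * f x * (a - s)^2/2))
            (-(K * f x * (↑2 * (a - s) ^ (2 - 1) * -1) / 2)) s := h2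
        convert h3 using 1
        ring
      rw [intervalIntegral.integral_eq_sub_of_hasDerivAt hder
        ((Continuous.intervalIntegrable (by fun_prop) x a))]
      ring
    have hfinal : f x ≤ K * f x * (a - x)^2/2 := by
      rw [hI1, hI2] at hmono2
      exact hmono2
    have haxr : a - x = r := by rw [hxdef]; ring
    have hfx0 : f x = 0 := by
      rw [haxr] at hfinal
      have hfxnn : 0 ≤ f x := hpos x hx0.le
      nlinarith [hrK, hfxnn]
    have : a ≤ x := csInf_le hSbdd ⟨hx0.le, hfx0⟩
    linarith
  intro x hx
  exact hafter x (by rw [hA]; exact hx)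


private lemma factor_nonneg {k c A B : ℝ} (hk : 0 < k) (hc : 0 < c)
    (h : 0 ≤ k * (A - B) * c) : B ≤ A := by
  by_contra hlt
  push_neg at hlt
  have : k * (A - B) * c < 0 :=
    mul_neg_of_neg_of_pos (mul_neg_of_pos_of_neg hk (by linarith)) hc
  linarith

private lemma factor_nonneg' {c A B : ℝ} (hc : 0 < c) (h : 0 ≤ (A - B) * c) : B ≤ A := by
  by_contra hlt
  push_neg at hlt
  have : (A - B) * c < 0 := mul_neg_of_neg_of_pos (by linarith) hc
  linarith

set_option maxHeartbeats 2000000 in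
/-- The key a priori lower bound: a pulse cannot be entirely below `phivec p (Tb/2)` at `0`. -/
private lemma pulse_lower {p : Params} (hp : p.Pos) {Tb Tm : ℝ} (hP : CondP p Tb Tm)
    {τ₁ : ℝ} (hτ₁ : τ₁ ∈ Set.Ioo (0:ℝ) 1) {g : ℝ → ℝ} (hg : GoodG Tb Tm g)
    {τ : ℝ} (hτ : τ ∈ Set.Icc (0:ℝ) 1) {W : ℝ → Fin 8 → ℝ}
    (hW : IsPulse p (Ftau p τ₁ g τ) W) :
    ∃ j : Fin 8, phivec p (Tb/2) j < W 0 j := by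
  by_contra hall
  push_neg at hall
  obtain ⟨hC2, hEqn, hD0, hLim, hDneg⟩ := hW
  have hkpos := hp.1
  have hkb6 := hp.2.1
  have hkb8 := hp.2.2.1
  have hhpos := hp.2.2.2.1
  have hDpos := hp.2.2.2.2.2
  have hWpos : ∀ i : Fin 8, 0 < W 0 i := fun i =>
    (pulse_comp_pos (hC2 i).continuous (hDneg i) (hLim i)).1 0 le_rfl
  have hFge : ∀ i : Fin 8, 0 ≤ Ftau p τ₁ g τ (W 0) i := by
    intro i
    have hd2 := second_deriv_nonpos (hC2 i) (hD0 i) (hDneg i)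
    have heq := hEqn i 0 le_rfl
    nlinarith [mul_nonneg (hDpos i).le (neg_nonneg.2 hd2)]
  set t : ℝ := Tb/2 with htdef
  have hTb0 : 0 < Tb := hP.1
  have ht0 : 0 < t := by rw [htdef]; linarith
  have htTb : t < Tb := by rw [htdef]; linarith
  have pv0 : ∀ s : ℝ, phivec p s 0 = phi1 p s := fun s => rfl
  have pv1 : ∀ s : ℝ, phivec p s 1 = phi2 p s := fun s => rfl
  have pv2 : ∀ s : ℝ, phivec p s 2 = phi3 p s := fun s => rfl
  have pv3 : ∀ s : ℝ, phivec p s 3 = phi4 p s := fun s => rfl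
  have pv4 : ∀ s : ℝ, phivec p s 4 = phi5 p s := fun s => rfl
  have pv5 : ∀ s : ℝ, phivec p s 5 = phi6 p s := fun s => rfl
  have pv6 : ∀ s : ℝ, phivec p s 6 = phi7 p s := fun s => rfl
  have pv7 : ∀ s : ℝ, phivec p s 7 = s := fun s => rfl
  set m : ℝ := W 0 7 with hmdef
  have hm0 : 0 < m := hWpos 7
  set S : Set ℝ := {s : ℝ | s ∈ Set.Icc m t ∧ ∀ j, W 0 j ≤ phivec p s j} with hSdef
  have hmt : m ≤ t := by have := hall 7; rwa [pv7] at this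
  have htS : t ∈ S := ⟨⟨hmt, le_refl t⟩, hall⟩
  have hSne : S.Nonempty := ⟨t, htS⟩
  have hSbdd : BddBelow S := ⟨m, fun s hs => hs.1.1⟩
  have hSclosed : IsClosed S := by
    have hEq : S = ⋂ j : Fin 8,
        (Set.Icc m t ∩ (fun s => phivec p s j) ⁻¹' Set.Ici (W 0 j)) := by
      ext s
      simp only [hSdef, Set.mem_iInter, Set.mem_inter_iff, Set.mem_preimage, Set.mem_Ici,
        Set.mem_setOf_eq]
      constructor
      · rintro ⟨h1, h2⟩ j; exact ⟨h1, h2 j⟩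
      · intro h; exact ⟨(h 0).1, fun j => (h j).2⟩
    rw [hEq]
    apply isClosed_iInter
    intro j
    apply ContinuousOn.preimage_isClosed_of_isClosed _ isClosed_Icc isClosed_Ici
    intro s hs
    have hs0 : (0:ℝ) ≤ s := le_trans hm0.le hs.1
    fin_cases j
    · exact (contAt_phi1 hp hs0).continuousWithinAt
    · exact (contAt_phi2 hp hs0).continuousWithinAt
    · exact (contAt_phi3 hp hs0).continuousWithinAt
    · exact (contAt_phi4 hp hs0).continuousWithinAt
    · exact (contAt_phi5 hp hs0).continuousWithinAt
    · exact (contAt_phi6 hp hs0).continuousWithinAt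
    · exact (contAt_phi7 hp hs0).continuousWithinAt
    · exact continuousWithinAt_id
  set ts := sInf S with htsdef
  have htsS : ts ∈ S := hSclosed.csInf_mem hSne hSbdd
  have hm_ts : m ≤ ts := htsS.1.1
  have hts_t : ts ≤ t := htsS.1.2
  have hts0 : 0 < ts := lt_of_lt_of_le hm0 hm_ts
  have htsTb : ts < Tb := lt_of_le_of_lt hts_t htTb
  have hle : ∀ j, W 0 j ≤ phivec p ts j := htsS.2
  have hle0 : W 0 0 ≤ phi1 p ts := by have := hle 0; rwa [pv0] at this
  have hle1 : W 0 1 ≤ phi2 p ts := by have := hle 1; rwa [pv1] at this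
  have hle2 : W 0 2 ≤ phi3 p ts := by have := hle 2; rwa [pv2] at this
  have hle3 : W 0 3 ≤ phi4 p ts := by have := hle 3; rwa [pv3] at this
  have hle4 : W 0 4 ≤ phi5 p ts := by have := hle 4; rwa [pv4] at this
  have hle5 : W 0 5 ≤ phi6 p ts := by have := hle 5; rwa [pv5] at this
  have hle7 : W 0 7 ≤ ts := by have := hle 7; rwa [pv7] at this
  have hle6 : W 0 6 ≤ phi7 p ts := by have := hle 6; rwa [pv6] at this
  -- the chain implications
  have chain2 : W 0 2 = phi3 p ts → W 0 7 = ts := by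
    intro h2
    have hF := hFge 2
    rw [Ftau_ne7 p τ₁ g τ (W 0) (by decide), Fvec_app2, h2] at hF
    have hid := id_row2 hp hts0.le
    have hlt := phi3_lt hp hts0.le
    have hfac : 0 ≤ p.k 2 * (W 0 7 - ts) * (p.ρ 2 - phi3 p ts) := by
      have hring : p.k 2 * (W 0 7 - ts) * (p.ρ 2 - phi3 p ts) =
          (p.k 2 * W 0 7 * (p.ρ 2 - phi3 p ts) - p.h 2 * phi3 p ts) -
          (p.k 2 * ts * (p.ρ 2 - phi3 p ts) - p.h 2 * phi3 p ts) := by ring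
      rw [hring, hid]; linarith
    exact le_antisymm hle7 (factor_nonneg (hkpos 2) (by linarith) hfac)
  have chain3 : W 0 3 = phi4 p ts → W 0 7 = ts := by
    intro h3
    have hF := hFge 3
    rw [Ftau_ne7 p τ₁ g τ (W 0) (by decide), Fvec_app3, h3] at hF
    have hid := id_row3 hp hts0.le
    have hlt := phi4_lt hp hts0.le
    have hfac : 0 ≤ p.k 3 * (W 0 7 - ts) * (p.ρ 3 - phi4 p ts) := by
      have hring : p.k 3 * (W 0 7 - ts) * (p.ρ 3 - phi4 p ts) =
          (p.k 3 * W 0 7 * (p.ρ 3 - phi4 p ts) - p.h 3 * phi4 p ts) -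
          (p.k 3 * ts * (p.ρ 3 - phi4 p ts) - p.h 3 * phi4 p ts) := by ring
      rw [hring, hid]; linarith
    exact le_antisymm hle7 (factor_nonneg (hkpos 3) (by linarith) hfac)
  have chain6 : W 0 6 = phi7 p ts → W 0 7 = ts := by
    intro h6
    have hF := hFge 6
    rw [Ftau_ne7 p τ₁ g τ (W 0) (by decide), Fvec_app6, h6] at hF
    have hid := id_row6 hp hts0.le
    have hlt := phi7_lt hp hts0.le
    have hfac : 0 ≤ p.k 6 * (W 0 7 - ts) * (p.ρ 6 - phi7 p ts) := by
      have hring : p.k 6 * (W 0 7 - ts) * (p.ρ 6 - phi7 p ts) =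
          (p.k 6 * W 0 7 * (p.ρ 6 - phi7 p ts) - p.h 6 * phi7 p ts) -
          (p.k 6 * ts * (p.ρ 6 - phi7 p ts) - p.h 6 * phi7 p ts) := by ring
      rw [hring, hid]; linarith
    exact le_antisymm hle7 (factor_nonneg (hkpos 6) (by linarith) hfac)
  have chain4 : W 0 4 = phi5 p ts → W 0 7 = ts := by
    intro h4
    have hF := hFge 4
    rw [Ftau_ne7 p τ₁ g τ (W 0) (by decide), Fvec_app4, h4] at hF
    have hid := id_row4 hp hts0.le
    have hlt := phi5_lt hp hts0.le
    have hfac : 0 ≤ p.k 4 * (W 0 6 - phi7 p ts) * (p.ρ 4 - phi5 p ts) := by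
      have hring : p.k 4 * (W 0 6 - phi7 p ts) * (p.ρ 4 - phi5 p ts) =
          (p.k 4 * W 0 6 * (p.ρ 4 - phi5 p ts) - p.h 4 * phi5 p ts) -
          (p.k 4 * phi7 p ts * (p.ρ 4 - phi5 p ts) - p.h 4 * phi5 p ts) := by ring
      rw [hring, hid]; linarith
    exact chain6 (le_antisymm hle6 (factor_nonneg (hkpos 4) (by linarith) hfac))
  have chain5 : W 0 5 = phi6 p ts → W 0 7 = ts := by
    intro h5
    have hF := hFge 5
    rw [Ftau_ne7 p τ₁ g τ (W 0) (by decide), Fvec_app5, h5] at hF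
    have hid := id_row5 hp hts0.le
    have hlt := phi6_lt hp hts0.le
    have hfac : 0 ≤ ((p.k 5 * W 0 4 + p.kb6 * W 0 1) -
        (p.k 5 * phi5 p ts + p.kb6 * phi2 p ts)) * (p.ρ 5 - phi6 p ts) := by
      have hring : ((p.k 5 * W 0 4 + p.kb6 * W 0 1) -
          (p.k 5 * phi5 p ts + p.kb6 * phi2 p ts)) * (p.ρ 5 - phi6 p ts) =
          ((p.k 5 * W 0 4 + p.kb6 * W 0 1) * (p.ρ 5 - phi6 p ts) - p.h 5 * phi6 p ts) -
          ((p.k 5 * phi5 p ts + p.kb6 * phi2 p ts) * (p.ρ 5 - phi6 p ts) -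
            p.h 5 * phi6 p ts) := by ring
      rw [hring, hid]; linarith
    have hsum : p.k 5 * phi5 p ts + p.kb6 * phi2 p ts ≤
        p.k 5 * W 0 4 + p.kb6 * W 0 1 := factor_nonneg' (by linarith) hfac
    have h54 : p.k 5 * phi5 p ts ≤ p.k 5 * W 0 4 := by
      nlinarith [mul_le_mul_of_nonneg_left hle1 hkb6.le]
    exact chain4 (le_antisymm hle4 (le_of_mul_le_mul_left h54 (hkpos 5)))
  have chain1 : W 0 1 = phi2 p ts → W 0 7 = ts := by
    intro h1
    have hF := hFge 1
    rw [Ftau_ne7 p τ₁ g τ (W 0) (by decide), Fvec_app1, h1] at hF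
    have hid := id_row1 hp (T := ts)
    have hφ4 := phi4_pos hp hts0
    have hk1 := hkpos 1
    have hup : p.k 1 * W 0 3 * W 0 4 ≤ p.k 1 * phi4 p ts * W 0 4 := by
      nlinarith [mul_nonneg (sub_nonneg.2 hle3) (hWpos 4).le]
    have hlow : p.k 1 * phi4 p ts * phi5 p ts ≤ p.k 1 * phi4 p ts * W 0 4 := by linarith
    have h45 : phi5 p ts ≤ W 0 4 :=
      le_of_mul_le_mul_left (by linarith [hlow] : (p.k 1 * phi4 p ts) * phi5 p ts ≤
        (p.k 1 * phi4 p ts) * W 0 4) (by positivity)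
    exact chain4 (le_antisymm hle4 h45)
  have chain0 : W 0 0 = phi1 p ts → W 0 7 = ts := by
    intro h0
    have hF := hFge 0
    rw [Ftau_ne7 p τ₁ g τ (W 0) (by decide), Fvec_app0, h0] at hF
    have hid := id_row0 hp (T := ts)
    have hφ3 := phi3_pos hp hts0
    have hk0 := hkpos 0
    have hup : p.k 0 * W 0 2 * W 0 5 ≤ p.k 0 * phi3 p ts * W 0 5 := by
      nlinarith [mul_nonneg (sub_nonneg.2 hle2) (hWpos 5).le]
    have h56 : phi6 p ts ≤ W 0 5 :=
      le_of_mul_le_mul_left (by linarith : (p.k 0 * phi3 p ts) * phi6 p ts ≤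
        (p.k 0 * phi3 p ts) * W 0 5) (by positivity)
    exact chain5 (le_antisymm hle5 h56)
  -- some component attains equality
  have hexeq : ∃ j, W 0 j = phivec p ts j := by
    by_contra hno
    push_neg at hno
    have hstrict : ∀ j, W 0 j < phivec p ts j := fun j => lt_of_le_of_ne (hle j) (hno j)
    have hm_lt : m < ts := by have := hstrict 7; rwa [pv7] at this
    have hnb : (𝓝[Set.Ioo (0:ℝ) ts] ts).NeBot := by
      rw [← mem_closure_iff_nhdsWithin_neBot, closure_Ioo (ne_of_lt hts0)]
      exact ⟨hts0.le, le_refl _⟩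
    have hevs : ∀ j : Fin 8, ∀ᶠ s in 𝓝[Set.Ioo (0:ℝ) ts] ts, W 0 j < phivec p s j := by
      intro j
      have hcj : ContinuousWithinAt (fun s => phivec p s j) (Set.Ioo (0:ℝ) ts) ts := by
        fin_cases j
        · exact (contAt_phi1 hp hts0.le).continuousWithinAt
        · exact (contAt_phi2 hp hts0.le).continuousWithinAt
        · exact (contAt_phi3 hp hts0.le).continuousWithinAt
        · exact (contAt_phi4 hp hts0.le).continuousWithinAt
        · exact (contAt_phi5 hp hts0.le).continuousWithinAt
        · exact (contAt_phi6 hp hts0.le).continuousWithinAt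
        · exact (contAt_phi7 hp hts0.le).continuousWithinAt
        · exact continuousWithinAt_id
      exact hcj.eventually_const_lt (hstrict j)
    have hball : ∀ᶠ s in 𝓝[Set.Ioo (0:ℝ) ts] ts, s ∈ Set.Ioi m :=
      mem_nhdsWithin_of_mem_nhds (isOpen_Ioi.mem_nhds hm_lt)
    have hmem : ∀ᶠ s in 𝓝[Set.Ioo (0:ℝ) ts] ts, s ∈ Set.Ioo (0:ℝ) ts :=
      self_mem_nhdsWithin
    obtain ⟨s, hsj, hsm, hsIoo⟩ := ((eventually_all.2 hevs).and (hball.and hmem)).exists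
    have hsS : s ∈ S :=
      ⟨⟨le_of_lt hsm, le_trans hsIoo.2.le hts_t⟩, fun j => (hsj j).le⟩
    have : ts ≤ s := csInf_le hSbdd hsS
    exact absurd this (not_le.2 hsIoo.2)
  obtain ⟨j0, hj0⟩ := hexeq
  have hW7 : W 0 7 = ts := by
    fin_cases j0
    · exact chain0 hj0
    · exact chain1 hj0
    · exact chain2 hj0
    · exact chain3 hj0
    · exact chain4 hj0
    · exact chain5 hj0
    · exact chain6 hj0
    · exact hj0
  -- final contradiction via component 7
  have hF7 := hFge 7
  rw [Ftau_7] at hF7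
  obtain ⟨hA, hB, hAB, hC⟩ := coeffs_facts hτ₁ hτ
  have hPneg : Ppoly p ts < 0 := Ppoly_neg hp hP hts0 htsTb
  have hgval : g (W 0 7) = 0 := by
    rw [hW7]
    apply image_eq_zero_of_notMem_tsupport
    intro hmem
    exact absurd (hg.2.2 hmem).1 (not_lt.2 htsTb.le)
  have hrle : 0 ≤ p.ρ 7 - ts := by
    have h1 := Tm_lt_rho7 hp hP
    have h2 : Tb < Tm := hP.2.1
    linarith
  have hF8le : Fvec p (W 0) 7 ≤ Ppoly p ts := by
    rw [Fvec_app7, hW7]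
    unfold Ppoly
    nlinarith [mul_le_mul_of_nonneg_right (add_le_add
      (mul_le_mul_of_nonneg_left hle5 (hkpos 7).le)
      (mul_le_mul_of_nonneg_left hle0 hkb8.le)) hrle]
  rw [hgval, mul_zero, add_zero, hW7] at hF7
  have hABP : (if τ < τ₁ then (1:ℝ) else (1 - τ) / (1 - τ₁)) * Ppoly p ts +
      (if τ < τ₁ then (0:ℝ) else (τ - τ₁) / (1 - τ₁)) * Ppoly p ts = Ppoly p ts := by
    rw [← add_mul, hAB, one_mul]
  linarith [mul_le_mul_of_nonneg_left hF8le hA,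
    mul_nonpos_of_nonneg_of_nonpos hB hPneg.le]


/-- A `C²`-limit (uniform on `[0,∞)`, together with first and second derivatives) of pulses
for `F^{τ_k}`, `τ_k → τ̂`, vanishing at `+∞`, is strictly positive on `[0,∞)`. -/
theorem limit_of_pulses_positive (p : Params) (hp : p.Pos) (Tb Tm : ℝ)
    (hP : CondP p Tb Tm) (τ₁ : ℝ) (hτ₁ : τ₁ ∈ Set.Ioo (0 : ℝ) 1) (g : ℝ → ℝ)
    (hg : GoodG Tb Tm g) (τseq : ℕ → ℝ) (hτseq : ∀ n, τseq n ∈ Set.Icc (0 : ℝ) 1)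
    (τhat : ℝ) (hτlim : Tendsto τseq atTop (𝓝 τhat))
    (w : ℕ → ℝ → Fin 8 → ℝ) (hw : ∀ n, IsPulse p (Ftau p τ₁ g (τseq n)) (w n))
    (what : ℝ → Fin 8 → ℝ)
    (hu0 : ∀ i : Fin 8, TendstoUniformlyOn (fun n x => w n x i)
      (fun x => what x i) atTop (Set.Ici 0))
    (hu1 : ∀ i : Fin 8, TendstoUniformlyOn (fun n x => deriv (fun y => w n y i) x)
      (fun x => deriv (fun y => what y i) x) atTop (Set.Ici 0))
    (hu2 : ∀ i : Fin 8, TendstoUniformlyOn (fun n x => deriv (deriv (fun y => w n y i)) x)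
      (fun x => deriv (deriv (fun y => what y i)) x) atTop (Set.Ici 0))
    (hlim0 : ∀ i, Tendsto (fun x => what x i) atTop (𝓝 0)) :
    ∀ i : Fin 8, ∀ x : ℝ, 0 ≤ x → 0 < what x i := by
  -- pointwise convergence
  have ptw0 : ∀ (i : Fin 8) (x : ℝ), 0 ≤ x →
      Tendsto (fun n => w n x i) atTop (𝓝 (what x i)) :=
    fun i x hx => (hu0 i).tendsto_at hx
  have ptw1 : ∀ (i : Fin 8) (x : ℝ), 0 ≤ x →
      Tendsto (fun n => deriv (fun y => w n y i) x) atTop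
        (𝓝 (deriv (fun y => what y i) x)) :=
    fun i x hx => (hu1 i).tendsto_at hx
  have ptw2 : ∀ (i : Fin 8) (x : ℝ), 0 ≤ x →
      Tendsto (fun n => deriv (deriv (fun y => w n y i)) x) atTop
        (𝓝 (deriv (deriv (fun y => what y i)) x)) :=
    fun i x hx => (hu2 i).tendsto_at hx
  -- facts about each pulse
  have hwfacts : ∀ (n : ℕ) (i : Fin 8),
      (∀ x : ℝ, 0 ≤ x → 0 < w n x i) ∧
        (∀ x y : ℝ, 0 ≤ x → x ≤ y → w n y i ≤ w n x i) :=
    fun n i => pulse_comp_pos ((hw n).1 i).continuous ((hw n).2.2.2.2 i) ((hw n).2.2.2.1 i)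
  -- limit facts
  have wh0 : ∀ (i : Fin 8) (x : ℝ), 0 ≤ x → 0 ≤ what x i := fun i x hx =>
    ge_of_tendsto (ptw0 i x hx) (Eventually.of_forall fun n => ((hwfacts n i).1 x hx).le)
  have whAnti : ∀ (i : Fin 8) (x y : ℝ), 0 ≤ x → x ≤ y → what y i ≤ what x i :=
    fun i x y hx hxy =>
      le_of_tendsto_of_tendsto' (ptw0 i y (hx.trans hxy)) (ptw0 i x hx)
        (fun n => (hwfacts n i).2 x y hx hxy)
  have c0 : ∀ i : Fin 8, ContinuousOn (fun x => what x i) (Set.Ici 0) := fun i =>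
    (hu0 i).continuousOn (Frequently.of_forall fun n =>
      ((hw n).1 i).continuous.continuousOn)
  have c1 : ∀ i : Fin 8,
      ContinuousOn (fun x => deriv (fun y => what y i) x) (Set.Ici 0) := fun i =>
    (hu1 i).continuousOn (Frequently.of_forall fun n =>
      ((contDiff2_facts ((hw n).1 i)).2.1.continuous).continuousOn)
  have c2 : ∀ i : Fin 8,
      ContinuousOn (fun x => deriv (deriv (fun y => what y i)) x) (Set.Ici 0) := fun i =>
    (hu2 i).continuousOn (Frequently.of_forall fun n =>
      ((contDiff2_facts ((hw n).1 i)).2.2).continuousOn)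
  have dw0 : ∀ i : Fin 8, deriv (fun y => what y i) 0 = 0 := by
    intro i
    have h1 := ptw1 i 0 le_rfl
    have h2 : (fun n => deriv (fun y => w n y i) 0) = fun _ => (0:ℝ) :=
      funext fun n => (hw n).2.2.1 i
    rw [h2] at h1
    exact tendsto_nhds_unique h1 tendsto_const_nhds
  have derivnonpos : ∀ (i : Fin 8) (x : ℝ), 0 < x → deriv (fun y => what y i) x ≤ 0 :=
    fun i x hx => le_of_tendsto (ptw1 i x hx.le)
      (Eventually.of_forall fun n => ((hw n).2.2.2.2 i x hx).le)
  have hder1 : ∀ (i : Fin 8) (x : ℝ), 0 < x →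
      HasDerivAt (fun y => what y i) (deriv (fun y => what y i) x) x := by
    intro i x hx
    exact hasDerivAt_of_tendstoUniformlyOn isOpen_Ioi
      ((hu1 i).mono Set.Ioi_subset_Ici_self)
      (Eventually.of_forall fun n y _ =>
        ((contDiff2_facts ((hw n).1 i)).1 y).hasDerivAt)
      (fun y hy => ptw0 i y (le_of_lt hy))
      (Set.mem_Ioi.2 hx)
  have hder2 : ∀ (i : Fin 8) (x : ℝ), 0 < x →
      HasDerivAt (fun y => deriv (fun t => what t i) y)
        (deriv (deriv (fun y => what y i)) x) x := by
    intro i x hx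
    exact hasDerivAt_of_tendstoUniformlyOn isOpen_Ioi
      ((hu2 i).mono Set.Ioi_subset_Ici_self)
      (Eventually.of_forall fun n y _ =>
        ((contDiff2_facts ((hw n).1 i)).2.1 y).hasDerivAt)
      (fun y hy => ptw1 i y (le_of_lt hy))
      (Set.mem_Ioi.2 hx)
  have hτhat : τhat ∈ Set.Icc (0:ℝ) 1 :=
    isClosed_Icc.mem_of_tendsto hτlim (Eventually.of_forall hτseq)
  -- convergence of the reaction terms
  have hFtend : ∀ (i : Fin 8) (x : ℝ), 0 ≤ x →
      Tendsto (fun n => Ftau p τ₁ g (τseq n) (w n x) i) atTop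
        (𝓝 (Ftau p τ₁ g τhat (what x) i)) := by
    intro i x hx
    have pt : ∀ j : Fin 8, Tendsto (fun n => w n x j) atTop (𝓝 (what x j)) :=
      fun j => ptw0 j x hx
    rcases eq_or_ne i 7 with rfl | hi
    · have hτ1lt : τ₁ < 1 := hτ₁.2
      have hd : (0:ℝ) < 1 - τ₁ := by linarith
      have hAeq : ∀ σ : ℝ, (if σ < τ₁ then (1:ℝ) else (1-σ)/(1-τ₁)) =
          min 1 ((1-σ)/(1-τ₁)) := by
        intro σ; split_ifs with h
        · rw [eq_comm, min_eq_left_iff, le_div_iff₀ hd]; linarith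
        · push_neg at h; rw [eq_comm, min_eq_right_iff, div_le_one hd]; linarith
      have hBeq : ∀ σ : ℝ, (if σ < τ₁ then (0:ℝ) else (σ-τ₁)/(1-τ₁)) =
          max 0 ((σ-τ₁)/(1-τ₁)) := by
        intro σ; split_ifs with h
        · rw [eq_comm, max_eq_left_iff]
          exact div_nonpos_of_nonpos_of_nonneg (by linarith) hd.le
        · push_neg at h
          rw [eq_comm, max_eq_right_iff]
          exact div_nonneg (by linarith) hd.le
      have hCeq : ∀ σ : ℝ, (if σ < τ₁ then σ else τ₁) = min σ τ₁ := by
        intro σ; split_ifs with h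
        · rw [min_eq_left h.le]
        · push_neg at h; rw [min_eq_right h]
      have hAt : Tendsto (fun n => min (1:ℝ) ((1 - τseq n)/(1-τ₁))) atTop
          (𝓝 (min 1 ((1-τhat)/(1-τ₁)))) :=
        tendsto_const_nhds.min ((hτlim.const_sub 1).div_const _)
      have hBt : Tendsto (fun n => max (0:ℝ) ((τseq n - τ₁)/(1-τ₁))) atTop
          (𝓝 (max 0 ((τhat-τ₁)/(1-τ₁)))) :=
        tendsto_const_nhds.max ((hτlim.sub_const τ₁).div_const _)
      have hCt : Tendsto (fun n => min (τseq n) τ₁) atTop (𝓝 (min τhat τ₁)) :=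
        hτlim.min tendsto_const_nhds
      have hPt : Tendsto (fun n => Ppoly p (w n x 7)) atTop (𝓝 (Ppoly p (what x 7))) :=
        ((contAt_Ppoly hp (wh0 7 x hx)).tendsto).comp (pt 7)
      have hgt : Tendsto (fun n => g (w n x 7)) atTop (𝓝 (g (what x 7))) :=
        (hg.1.continuous.tendsto _).comp (pt 7)
      have hFv : Tendsto (fun n => Fvec p (w n x) 7) atTop (𝓝 (Fvec p (what x) 7)) := by
        simp only [Fvec_app7]
        exact ((((pt 5).const_mul (p.k 7)).add ((pt 0).const_mul p.kb8)).mul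
          (tendsto_const_nhds.sub (pt 7))).sub ((pt 7).const_mul (p.h 7))
      simp only [Ftau_7, hAeq, hBeq, hCeq]
      exact ((hAt.mul hFv).add (hBt.mul hPt)).add (hCt.mul hgt)
    · have h1 : (fun n => Ftau p τ₁ g (τseq n) (w n x) i) =
          fun n => Fvec p (w n x) i :=
        funext fun n => Ftau_ne7 p τ₁ g (τseq n) (w n x) hi
      rw [h1, Ftau_ne7 p τ₁ g τhat (what x) hi]
      fin_cases i
      · simp only [Fvec_app0]
        exact (((pt 2).const_mul (p.k 0)).mul (pt 5)).sub ((pt 0).const_mul (p.h 0))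
      · simp only [Fvec_app1]
        exact (((pt 3).const_mul (p.k 1)).mul (pt 4)).sub ((pt 1).const_mul (p.h 1))
      · simp only [Fvec_app2]
        exact (((pt 7).const_mul (p.k 2)).mul
          (tendsto_const_nhds.sub (pt 2))).sub ((pt 2).const_mul (p.h 2))
      · simp only [Fvec_app3]
        exact (((pt 7).const_mul (p.k 3)).mul
          (tendsto_const_nhds.sub (pt 3))).sub ((pt 3).const_mul (p.h 3))
      · simp only [Fvec_app4]
        exact (((pt 6).const_mul (p.k 4)).mul
          (tendsto_const_nhds.sub (pt 4))).sub ((pt 4).const_mul (p.h 4))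
      · simp only [Fvec_app5]
        exact ((((pt 4).const_mul (p.k 5)).add ((pt 1).const_mul p.kb6)).mul
          (tendsto_const_nhds.sub (pt 5))).sub ((pt 5).const_mul (p.h 5))
      · simp only [Fvec_app6]
        exact (((pt 7).const_mul (p.k 6)).mul
          (tendsto_const_nhds.sub (pt 6))).sub ((pt 6).const_mul (p.h 6))
      · exact absurd rfl hi
  -- the limiting equation
  have eqlim : ∀ (i : Fin 8) (x : ℝ), 0 ≤ x →
      p.D i * deriv (deriv (fun y => what y i)) x + Ftau p τ₁ g τhat (what x) i = 0 := by
    intro i x hx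
    have h1 : Tendsto (fun n => p.D i * deriv (deriv (fun y => w n y i)) x +
        Ftau p τ₁ g (τseq n) (w n x) i) atTop
        (𝓝 (p.D i * deriv (deriv (fun y => what y i)) x +
          Ftau p τ₁ g τhat (what x) i)) :=
      (((ptw2 i x hx).const_mul (p.D i))).add (hFtend i x hx)
    have h2 : (fun n => p.D i * deriv (deriv (fun y => w n y i)) x +
        Ftau p τ₁ g (τseq n) (w n x) i) = fun _ => (0:ℝ) :=
      funext fun n => (hw n).2.1 i x hx
    rw [h2] at h1
    exact tendsto_nhds_unique h1 tendsto_const_nhds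
  -- the uniform lower bound at 0
  have hlow : ∃ j : Fin 8, phivec p (Tb/2) j ≤ what 0 j := by
    have hfreq : ∃ j : Fin 8, ∃ᶠ n in atTop, phivec p (Tb/2) j < w n 0 j := by
      by_contra hno
      push_neg at hno
      have h1 : ∀ᶠ n in atTop, ∀ j : Fin 8, ¬ (phivec p (Tb/2) j < w n 0 j) :=
        eventually_all.2 fun j => ((hno j).mono fun n hn => not_lt.2 hn)
      obtain ⟨n, hn⟩ := h1.exists
      obtain ⟨j, hj⟩ := pulse_lower hp hP hτ₁ hg (hτseq n) (hw n)
      exact hn j hj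
    obtain ⟨j, hj⟩ := hfreq
    refine ⟨j, ?_⟩
    by_contra hlt
    push_neg at hlt
    have hev : ∀ᶠ n in atTop, w n 0 j < phivec p (Tb/2) j :=
      (ptw0 j 0 le_rfl).eventually_lt_const hlt
    obtain ⟨n, hn1, hn2⟩ := (hj.and_eventually hev).exists
    exact absurd hn1 (not_lt.2 hn2.le)
  -- main argument by contradiction
  by_contra hcon
  push_neg at hcon
  obtain ⟨i₀, x₀, hx₀, hle₀⟩ := hcon
  have hzero₀ : what x₀ i₀ = 0 := le_antisymm hle₀ (wh0 i₀ x₀ hx₀)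
  have hvanish : ∀ (i : Fin 8) (a : ℝ), 0 ≤ a → what a i = 0 →
      ∀ x, a ≤ x → what x i = 0 :=
    fun i a ha h0 x hx => le_antisymm (h0 ▸ whAnti i a x ha hx) (wh0 i x (ha.trans hx))
  have hFzero : ∀ (i : Fin 8) (a : ℝ), 0 ≤ a → what a i = 0 →
      Ftau p τ₁ g τhat (what (a+1)) i = 0 ∧ what (a+1) i = 0 := by
    intro i a ha h0
    have hz : ∀ x, a ≤ x → what x i = 0 := hvanish i a ha h0
    have hd1 : ∀ y : ℝ, a < y → deriv (fun t => what t i) y = 0 := by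
      intro y hy
      have hev : (fun t => what t i) =ᶠ[𝓝 y] fun _ => (0:ℝ) := by
        filter_upwards [isOpen_Ioi.mem_nhds hy] with z (hz' : a < z)
        exact hz z hz'.le
      rw [hev.deriv_eq]
      exact deriv_const y 0
    have hd2 : deriv (deriv (fun t => what t i)) (a+1) = 0 := by
      have hev : (deriv (fun t => what t i)) =ᶠ[𝓝 (a+1)] fun _ => (0:ℝ) := by
        filter_upwards [isOpen_Ioi.mem_nhds (by linarith : a < a+1)] with z (hz' : a < z)
        exact hd1 z hz'
      rw [hev.deriv_eq]
      exact deriv_const _ 0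
    have heq := eqlim i (a+1) (by linarith)
    rw [hd2, mul_zero, zero_add] at heq
    exact ⟨heq, hz (a+1) (by linarith)⟩
  -- cascade towards component 7
  have z2to7 : (∃ a : ℝ, 0 ≤ a ∧ what a 2 = 0) → (∃ a : ℝ, 0 ≤ a ∧ what a 7 = 0) := by
    rintro ⟨a, ha, h0⟩
    obtain ⟨hF, hv⟩ := hFzero 2 a ha h0
    rw [Ftau_ne7 p τ₁ g τhat _ (by decide), Fvec_app2, hv] at hF
    simp only [sub_zero, mul_zero] at hF
    refine ⟨a+1, by linarith, ?_⟩
    rcases mul_eq_zero.1 hF with h | h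
    · rcases mul_eq_zero.1 h with h' | h'
      · exact absurd h' (ne_of_gt (hp.1 2))
      · exact h'
    · exact absurd h (ne_of_gt (hp.2.2.2.2.1 2 (by decide)))
  have z3to7 : (∃ a : ℝ, 0 ≤ a ∧ what a 3 = 0) → (∃ a : ℝ, 0 ≤ a ∧ what a 7 = 0) := by
    rintro ⟨a, ha, h0⟩
    obtain ⟨hF, hv⟩ := hFzero 3 a ha h0
    rw [Ftau_ne7 p τ₁ g τhat _ (by decide), Fvec_app3, hv] at hF
    simp only [sub_zero, mul_zero] at hF
    refine ⟨a+1, by linarith, ?_⟩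
    rcases mul_eq_zero.1 hF with h | h
    · rcases mul_eq_zero.1 h with h' | h'
      · exact absurd h' (ne_of_gt (hp.1 3))
      · exact h'
    · exact absurd h (ne_of_gt (hp.2.2.2.2.1 3 (by decide)))
  have z6to7 : (∃ a : ℝ, 0 ≤ a ∧ what a 6 = 0) → (∃ a : ℝ, 0 ≤ a ∧ what a 7 = 0) := by
    rintro ⟨a, ha, h0⟩
    obtain ⟨hF, hv⟩ := hFzero 6 a ha h0
    rw [Ftau_ne7 p τ₁ g τhat _ (by decide), Fvec_app6, hv] at hF
    simp only [sub_zero, mul_zero] at hF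
    refine ⟨a+1, by linarith, ?_⟩
    rcases mul_eq_zero.1 hF with h | h
    · rcases mul_eq_zero.1 h with h' | h'
      · exact absurd h' (ne_of_gt (hp.1 6))
      · exact h'
    · exact absurd h (ne_of_gt (hp.2.2.2.2.1 6 (by decide)))
  have z4to6 : (∃ a : ℝ, 0 ≤ a ∧ what a 4 = 0) → (∃ a : ℝ, 0 ≤ a ∧ what a 6 = 0) := by
    rintro ⟨a, ha, h0⟩
    obtain ⟨hF, hv⟩ := hFzero 4 a ha h0
    rw [Ftau_ne7 p τ₁ g τhat _ (by decide), Fvec_app4, hv] at hF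
    simp only [sub_zero, mul_zero] at hF
    refine ⟨a+1, by linarith, ?_⟩
    rcases mul_eq_zero.1 hF with h | h
    · rcases mul_eq_zero.1 h with h' | h'
      · exact absurd h' (ne_of_gt (hp.1 4))
      · exact h'
    · exact absurd h (ne_of_gt (hp.2.2.2.2.1 4 (by decide)))
  have z5to4 : (∃ a : ℝ, 0 ≤ a ∧ what a 5 = 0) → (∃ a : ℝ, 0 ≤ a ∧ what a 4 = 0) := by
    rintro ⟨a, ha, h0⟩
    obtain ⟨hF, hv⟩ := hFzero 5 a ha h0
    rw [Ftau_ne7 p τ₁ g τhat _ (by decide), Fvec_app5, hv] at hF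
    simp only [sub_zero, mul_zero] at hF
    refine ⟨a+1, by linarith, ?_⟩
    have hsum : p.k 5 * what (a+1) 4 + p.kb6 * what (a+1) 1 = 0 := by
      rcases mul_eq_zero.1 hF with h | h
      · exact h
      · exact absurd h (ne_of_gt (hp.2.2.2.2.1 5 (by decide)))
    have h4nn : 0 ≤ what (a+1) 4 := wh0 4 (a+1) (by linarith)
    have h1nn : 0 ≤ what (a+1) 1 := wh0 1 (a+1) (by linarith)
    have h4le : p.k 5 * what (a+1) 4 ≤ p.k 5 * 0 := by
      rw [mul_zero]
      nlinarith [mul_nonneg (hp.2.1).le h1nn]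
    exact le_antisymm (le_of_mul_le_mul_left h4le (hp.1 5)) h4nn
  have z1to7 : (∃ a : ℝ, 0 ≤ a ∧ what a 1 = 0) → (∃ a : ℝ, 0 ≤ a ∧ what a 7 = 0) := by
    rintro ⟨a, ha, h0⟩
    obtain ⟨hF, hv⟩ := hFzero 1 a ha h0
    rw [Ftau_ne7 p τ₁ g τhat _ (by decide), Fvec_app1, hv] at hF
    simp only [mul_zero, sub_zero] at hF
    rcases mul_eq_zero.1 hF with h | h
    · rcases mul_eq_zero.1 h with h' | h'
      · exact absurd h' (ne_of_gt (hp.1 1))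
      · exact z3to7 ⟨a+1, by linarith, h'⟩
    · exact z6to7 (z4to6 ⟨a+1, by linarith, h⟩)
  have z0to7 : (∃ a : ℝ, 0 ≤ a ∧ what a 0 = 0) → (∃ a : ℝ, 0 ≤ a ∧ what a 7 = 0) := by
    rintro ⟨a, ha, h0⟩
    obtain ⟨hF, hv⟩ := hFzero 0 a ha h0
    rw [Ftau_ne7 p τ₁ g τhat _ (by decide), Fvec_app0, hv] at hF
    simp only [mul_zero, sub_zero] at hF
    rcases mul_eq_zero.1 hF with h | h
    · rcases mul_eq_zero.1 h with h' | h'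
      · exact absurd h' (ne_of_gt (hp.1 0))
      · exact z2to7 ⟨a+1, by linarith, h'⟩
    · exact z6to7 (z4to6 (z5to4 ⟨a+1, by linarith, h⟩))
  have hZ7 : ∃ a : ℝ, 0 ≤ a ∧ what a 7 = 0 := by
    fin_cases i₀
    · exact z0to7 ⟨x₀, hx₀, hzero₀⟩
    · exact z1to7 ⟨x₀, hx₀, hzero₀⟩
    · exact z2to7 ⟨x₀, hx₀, hzero₀⟩
    · exact z3to7 ⟨x₀, hx₀, hzero₀⟩
    · exact z6to7 (z4to6 ⟨x₀, hx₀, hzero₀⟩)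
    · exact z6to7 (z4to6 (z5to4 ⟨x₀, hx₀, hzero₀⟩))
    · exact z6to7 ⟨x₀, hx₀, hzero₀⟩
    · exact ⟨x₀, hx₀, hzero₀⟩
  -- component 7 vanishes identically, by backward propagation
  obtain ⟨hA, hB, hAB, hC⟩ := coeffs_facts hτ₁ hτhat
  have hρ7 : 0 < p.ρ 7 := hp.2.2.2.2.1 7 (by decide)
  have hδ' : 0 < min Tb (p.ρ 7) := lt_min hP.1 hρ7
  have hv7ineq : ∀ x : ℝ, 0 < x → what x 7 ≤ min Tb (p.ρ 7) →
      deriv (deriv (fun y => what y 7)) x ≤ (p.h 7 / p.D 7) * what x 7 := by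
    intro x hx hxle
    have heq := eqlim 7 x hx.le
    rw [Ftau_7] at heq
    have hv70 : 0 ≤ what x 7 := wh0 7 x hx.le
    have hv7Tb : what x 7 ≤ Tb := le_trans hxle (min_le_left _ _)
    have hv7ρ : what x 7 ≤ p.ρ 7 := le_trans hxle (min_le_right _ _)
    have hFlb : -(p.h 7 * what x 7) ≤ Fvec p (what x) 7 := by
      rw [Fvec_app7]
      nlinarith [mul_nonneg (add_nonneg (mul_nonneg (hp.1 7).le (wh0 5 x hx.le))
        (mul_nonneg hp.2.2.1.le (wh0 0 x hx.le))) (sub_nonneg.2 hv7ρ)]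
    have hPlb : -(p.h 7 * what x 7) ≤ Ppoly p (what x 7) := Ppoly_lower hp hv70 hv7ρ
    have hglb : 0 ≤ g (what x 7) := hg.2.1 _ hv70
    have hid : (if τhat < τ₁ then (1:ℝ) else (1 - τhat) / (1 - τ₁)) *
        (-(p.h 7 * what x 7)) +
        (if τhat < τ₁ then (0:ℝ) else (τhat - τ₁) / (1 - τ₁)) * (-(p.h 7 * what x 7)) =
        -(p.h 7 * what x 7) := by
      rw [← add_mul, hAB, one_mul]
    have hcomb : -(p.h 7 * what x 7) ≤
        (if τhat < τ₁ then (1:ℝ) else (1 - τhat) / (1 - τ₁)) * Fvec p (what x) 7 +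
        (if τhat < τ₁ then (0:ℝ) else (τhat - τ₁) / (1 - τ₁)) * Ppoly p (what x 7) +
        (if τhat < τ₁ then τhat else τ₁) * g (what x 7) := by
      have h1 := mul_le_mul_of_nonneg_left hFlb hA
      have h2 := mul_le_mul_of_nonneg_left hPlb hB
      have h3 := mul_nonneg hC hglb
      linarith
    have hD7 := hp.2.2.2.2.2 7
    rw [div_mul_eq_mul_div, le_div_iff₀ hD7]
    nlinarith [heq, hcomb]
  have hv7zero : ∀ x : ℝ, 0 ≤ x → what x 7 = 0 := by
    refine backward_zero (div_pos (hp.2.2.2.1 7) (hp.2.2.2.2.2 7)) hδ'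
      (c0 7) (hder1 7) (hder2 7) (c2 7) (wh0 7) (whAnti 7) hv7ineq hZ7
  -- all other components vanish
  have hlin : ∀ i : Fin 8,
      (∀ x : ℝ, 0 < x → Ftau p τ₁ g τhat (what x) i = -(p.h i * what x i)) →
      ∀ x : ℝ, 0 ≤ x → what x i = 0 := by
    intro i hFeq
    refine vanish_of_convex ((c0 i) 0 Set.self_mem_Ici) (hder1 i)
      ((c1 i) 0 Set.self_mem_Ici) (dw0 i) (hder2 i) (c2 i) ?_ (derivnonpos i) (hlim0 i)
    intro x hx
    have heq := eqlim i x hx.le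
    rw [hFeq x hx] at heq
    have hDi := hp.2.2.2.2.2 i
    have hhi := hp.2.2.2.1 i
    have hvnn := wh0 i x hx.le
    nlinarith [mul_nonneg hhi.le hvnn]
  have hz2 : ∀ x : ℝ, 0 ≤ x → what x 2 = 0 := by
    refine hlin 2 ?_
    intro x hx
    rw [Ftau_ne7 p τ₁ g τhat _ (by decide), Fvec_app2, hv7zero x hx.le]
    ring
  have hz3 : ∀ x : ℝ, 0 ≤ x → what x 3 = 0 := by
    refine hlin 3 ?_
    intro x hx
    rw [Ftau_ne7 p τ₁ g τhat _ (by decide), Fvec_app3, hv7zero x hx.le]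
    ring
  have hz6 : ∀ x : ℝ, 0 ≤ x → what x 6 = 0 := by
    refine hlin 6 ?_
    intro x hx
    rw [Ftau_ne7 p τ₁ g τhat _ (by decide), Fvec_app6, hv7zero x hx.le]
    ring
  have hz4 : ∀ x : ℝ, 0 ≤ x → what x 4 = 0 := by
    refine hlin 4 ?_
    intro x hx
    rw [Ftau_ne7 p τ₁ g τhat _ (by decide), Fvec_app4, hz6 x hx.le]
    ring
  have hz1 : ∀ x : ℝ, 0 ≤ x → what x 1 = 0 := by
    refine hlin 1 ?_
    intro x hx
    rw [Ftau_ne7 p τ₁ g τhat _ (by decide), Fvec_app1, hz3 x hx.le]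
    ring
  have hz5 : ∀ x : ℝ, 0 ≤ x → what x 5 = 0 := by
    refine hlin 5 ?_
    intro x hx
    rw [Ftau_ne7 p τ₁ g τhat _ (by decide), Fvec_app5, hz4 x hx.le, hz1 x hx.le]
    ring
  have hz0 : ∀ x : ℝ, 0 ≤ x → what x 0 = 0 := by
    refine hlin 0 ?_
    intro x hx
    rw [Ftau_ne7 p τ₁ g τhat _ (by decide), Fvec_app0, hz2 x hx.le]
    ring
  -- contradiction with the lower bound
  obtain ⟨j, hj⟩ := hlow
  have hTb2 : 0 < Tb/2 := by linarith [hP.1]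
  have hcpos : 0 < phivec p (Tb/2) j := by
    fin_cases j
    · exact phi1_pos hp hTb2
    · exact phi2_pos hp hTb2
    · exact phi3_pos hp hTb2
    · exact phi4_pos hp hTb2
    · exact phi5_pos hp hTb2
    · exact phi6_pos hp hTb2
    · exact phi7_pos hp hTb2
    · exact hTb2
  have hzj : what 0 j = 0 := by
    fin_cases j
    · exact hz0 0 le_rfl
    · exact hz1 0 le_rfl
    · exact hz2 0 le_rfl
    · exact hz3 0 le_rfl
    · exact hz4 0 le_rfl
    · exact hz5 0 le_rfl
    · exact hz6 0 le_rfl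
    · exact hv7zero 0 le_rfl
  rw [hzj] at hj
  linarith


end
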